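/- Let f_n(t) = Σ_{k∈ℤ} (1/ε_n − |t/ε_n − (2k+1)n|)·1_{|t−(2k+1)n| ≤ ε_n} for a summable sequence (ε_n) in (0,1], and f = Σ_{n≥1} f_n. Then f : ℝ → ℝ is continuous but not uniformly continuous (indeed unbounded), hence f is not Bohr almost periodic. -/

import Mathlib

def RelativelyDense (A : Set ℝ) : Prop :=
  ∃ l > 0, ∀ t : ℝ, ∃ a ∈ A, a ∈ Set.Icc t (t + l)

def IsBohrAlmostPeriodic (x : ℝ → ℝ) : Prop :=
  Continuous x ∧
    ∀ ε > 0, RelativelyDense {τ : ℝ | ∀ t : ℝ, dist (x t) (x (t + τ)) ≤ ε}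

/-- The `n`-th 'tent' function: a sum over `k ∈ ℤ` of tents of height `1/e`
supported on `{|t - (2k+1)n| ≤ e}` around the points `(2k+1)n`. -/
noncomputable def tentSum (e : ℝ) (n : ℕ) (t : ℝ) : ℝ :=
  ∑' k : ℤ,
    Set.indicator {s : ℝ | |s - (2 * (k : ℝ) + 1) * n| ≤ e}
      (fun s => 1 / e - |s - (2 * (k : ℝ) + 1) * n| / e ^ 2) t

/-!
The tents making up `tentSum e n` have compact supports escaping to infinity, and so do
the supports of the summands of `f`; a locally finite sum of continuous functions is continuous.
At `t = n` the `n`-th summand equals `1 / ε n → ∞` and the others are nonnegative, so `f` is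
unbounded, whereas Bohr almost periodic functions are bounded. A uniformly continuous function on `ℝ` grows at most
linearly, which would force `1 / ε n ≤ C n`, and then `∑ ε n` would dominate a harmonic series.
-/

open Filter Function Metric Set

section LocallyFiniteSums

variable {ι : Type*}

lemma LocallyFinite.of_subset_norm_ge {E : Type*} [SeminormedAddCommGroup E] {s : ι → Set E}
    {R : ι → ℝ} (hR : Tendsto R cofinite atTop) (hs : ∀ i, s i ⊆ {x | R i ≤ ‖x‖}) :
    LocallyFinite s := by
  intro x
  refine ⟨ball x 1, ball_mem_nhds x one_pos, ?_⟩
  refine (eventually_cofinite.mp (hR.eventually_gt_atTop (‖x‖ + 1))).subset ?_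
  rintro i ⟨y, hys, hyx⟩
  have hy : ‖y‖ < ‖x‖ + 1 := by
    have := norm_sub_norm_le y x
    rw [mem_ball, dist_eq_norm] at hyx
    linarith
  exact not_lt.mpr ((hs i hys).trans hy.le)

variable {X M : Type*} [TopologicalSpace X] [AddCommMonoid M] [TopologicalSpace M]
  {f : ι → X → M}

lemma LocallyFinite.summable_apply (hf : LocallyFinite fun i => support (f i)) (x : X) :
    Summable fun i => f i x :=
  summable_of_hasFiniteSupport (hf.point_finite x)

lemma continuous_tsum_of_locallyFinite [ContinuousAdd M] (hc : ∀ i, Continuous (f i))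
    (hf : LocallyFinite fun i => support (f i)) : Continuous fun x => ∑' i, f i x := by
  simpa only [tsum_eq_finsum (hf.point_finite _)] using continuous_finsum hc hf

end LocallyFiniteSums

section Tent

noncomputable def tent (e c t : ℝ) : ℝ :=
  indicator {s | |s - c| ≤ e} (fun s => 1 / e - |s - c| / e ^ 2) t

variable {e c : ℝ}

lemma tent_eq_max (he : 0 < e) : tent e c = fun t => max 0 ((e - |t - c|) / e ^ 2) := by
  ext t
  by_cases h : |t - c| ≤ e
  · rw [tent, indicator_of_mem (by exact h),
      max_eq_right (div_nonneg (sub_nonneg.mpr h) (sq_nonneg e))]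
    field_simp
  · rw [tent, indicator_of_notMem (by exact h), max_eq_left]
    exact div_nonpos_of_nonpos_of_nonneg (by linarith [not_le.mp h]) (sq_nonneg e)

lemma tent_nonneg (he : 0 < e) (t : ℝ) : 0 ≤ tent e c t := by
  rw [tent_eq_max he]
  exact le_max_left _ _

lemma continuous_tent (he : 0 < e) : Continuous (tent e c) := by
  rw [tent_eq_max he]
  fun_prop

lemma tent_self (he : 0 ≤ e) : tent e c c = 1 / e := by
  rw [tent, indicator_of_mem (by simpa using he)]
  simp

lemma support_tent_subset (he : 0 < e) : support (tent e c) ⊆ ball c e := by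
  intro t ht
  rw [mem_ball, Real.dist_eq]
  by_contra! h
  exact ht (by
    simpa [tent_eq_max he] using div_nonpos_of_nonpos_of_nonneg (sub_nonpos.mpr h) (sq_nonneg e))

lemma abs_sub_lt_abs_of_mem_support_tent (he : 0 < e) {t : ℝ} (ht : t ∈ support (tent e c)) :
    |c| - e < |t| := by
  have hct := support_tent_subset he ht
  rw [mem_ball, Real.dist_eq] at hct
  linarith [abs_sub_abs_le_abs_sub c t, abs_sub_comm c t]

end Tent

section TentSum

variable {e : ℝ} {n : ℕ}

lemma tentSum_eq_tsum_tent (e : ℝ) (n : ℕ) (t : ℝ) :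
    tentSum e n t = ∑' k : ℤ, tent e ((2 * (k : ℝ) + 1) * n) t :=
  rfl

lemma abs_le_abs_two_mul_add_one (k : ℤ) : |k| ≤ |2 * k + 1| := by
  rcases abs_cases k with h | h <;> rcases abs_cases (2 * k + 1) with h' | h' <;> omega

lemma abs_intCast_le_abs_odd_mul (hn : 1 ≤ n) (k : ℤ) : |(k : ℝ)| ≤ |(2 * (k : ℝ) + 1) * n| := by
  rw [abs_mul, Nat.abs_cast]
  have hk : |(k : ℝ)| ≤ |2 * (k : ℝ) + 1| := by exact_mod_cast abs_le_abs_two_mul_add_one k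
  exact hk.trans (le_mul_of_one_le_right (abs_nonneg _) (by exact_mod_cast hn))

lemma natCast_le_abs_odd_mul (n : ℕ) (k : ℤ) : (n : ℝ) ≤ |(2 * (k : ℝ) + 1) * n| := by
  rw [abs_mul, Nat.abs_cast]
  have hk : (1 : ℝ) ≤ |2 * (k : ℝ) + 1| := by exact_mod_cast Int.one_le_abs (by omega)
  exact le_mul_of_one_le_left (Nat.cast_nonneg n) hk

lemma locallyFinite_support_tent (he : 0 < e) (hn : 1 ≤ n) :
    LocallyFinite fun k : ℤ => support (tent e ((2 * (k : ℝ) + 1) * n)) := by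
  refine LocallyFinite.of_subset_norm_ge (R := fun k : ℤ => |(k : ℝ)| - e)
    (tendsto_atTop_add_const_right _ _ (tendsto_norm_cocompact_atTop.comp Int.tendsto_coe_cofinite))
    fun k t ht => ?_
  show |(k : ℝ)| - e ≤ ‖t‖
  linarith [abs_sub_lt_abs_of_mem_support_tent he ht, abs_intCast_le_abs_odd_mul hn k,
    Real.norm_eq_abs t]

lemma continuous_tentSum (he : 0 < e) (hn : 1 ≤ n) : Continuous (tentSum e n) :=
  continuous_tsum_of_locallyFinite (fun _ => continuous_tent he) (locallyFinite_support_tent he hn)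

lemma tentSum_nonneg (he : 0 < e) (t : ℝ) : 0 ≤ tentSum e n t :=
  tsum_nonneg fun _ => tent_nonneg he t

lemma inv_le_tentSum_natCast (he : 0 < e) (hn : 1 ≤ n) : e⁻¹ ≤ tentSum e n n := by
  have h := ((locallyFinite_support_tent he hn).summable_apply (n : ℝ)).le_tsum 0
    fun _ _ => tent_nonneg he _
  rw [tentSum_eq_tsum_tent]
  simpa [tent_self he.le] using h

lemma support_tentSum_subset (he : 0 < e) :
    support (tentSum e n) ⊆ {t | n - e ≤ |t|} := by
  intro t ht
  obtain ⟨k, hk⟩ : ∃ k : ℤ, tent e ((2 * (k : ℝ) + 1) * n) t ≠ 0 := by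
    by_contra! h
    exact ht (by simp [tentSum_eq_tsum_tent, h])
  show (n : ℝ) - e ≤ |t|
  linarith [abs_sub_lt_abs_of_mem_support_tent he hk, natCast_le_abs_odd_mul n k]

lemma locallyFinite_support_tentSum {e : ℕ → ℝ} (he : ∀ n, 0 < e n) (he₁ : ∀ n, e n ≤ 1) :
    LocallyFinite fun n : ℕ => support (tentSum (e n) (n + 1)) := by
  refine LocallyFinite.of_subset_norm_ge (R := fun n : ℕ => (n : ℝ))
    (Nat.cofinite_eq_atTop ▸ tendsto_natCast_atTop_atTop) fun n t ht => ?_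
  have := support_tentSum_subset (he n) ht
  simp only [mem_ofPred_eq, Nat.cast_succ, Real.norm_eq_abs] at this ⊢
  linarith [he₁ n]

end TentSum

lemma UniformContinuous.exists_le_add_mul_natCast {f : ℝ → ℝ} (hf : UniformContinuous f) :
    ∃ C : ℝ, ∀ n : ℕ, f n ≤ f 0 + C * n := by
  obtain ⟨δ, hδ, hfδ⟩ := Metric.uniformContinuous_iff.mp hf 1 one_pos
  obtain ⟨N, hN⟩ := exists_nat_one_div_lt hδ
  have hN₀ : (0 : ℝ) < N + 1 := by positivity
  -- steps of length `1 / (N + 1) < δ` raise `f` by less than `1` each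
  have hstep : ∀ k : ℕ, f (k / (N + 1)) ≤ f 0 + k := by
    intro k
    induction k with
    | zero => simp
    | succ k ih =>
      have hdist : dist ((k + 1 : ℕ) / (N + 1) : ℝ) (k / (N + 1)) < δ := by
        rwa [Real.dist_eq, Nat.cast_succ, ← sub_div, add_sub_cancel_left,
          abs_of_pos (by positivity)]
      have := (abs_lt.mp (Real.dist_eq _ _ ▸ hfδ hdist)).2
      push_cast at this ⊢
      linarith
  refine ⟨N + 1, fun n => ?_⟩
  have := hstep (n * (N + 1))
  push_cast at this
  rwa [mul_div_cancel_right₀ _ hN₀.ne', mul_comm] at this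

lemma not_summable_of_inv_le_linear {u : ℕ → ℝ} (hu : ∀ n, 0 < u n) {a b : ℝ}
    (h : ∀ n, (u n)⁻¹ ≤ a + b * (n + 1)) : ¬ Summable u := by
  intro hsum
  have hharmonic : Summable fun n : ℕ => 1 / ((n + 1 : ℕ) : ℝ) := by
    refine (hsum.mul_left (|a| + |b|)).of_nonneg_of_le (fun n => by positivity) fun n => ?_
    have hn := h n
    rw [inv_le_iff_one_le_mul₀ (hu n)] at hn
    rw [div_le_iff₀ (by positivity)]
    have hn₁ : (1 : ℝ) ≤ n + 1 := le_add_of_nonneg_left n.cast_nonneg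
    have ha : a ≤ |a| * (n + 1) := (le_abs_self a).trans (le_mul_of_one_le_right (abs_nonneg a) hn₁)
    have hb : b * (n + 1) ≤ |b| * (n + 1) := by gcongr; exact le_abs_self b
    push_cast
    calc 1 ≤ (a + b * (n + 1)) * u n := hn
      _ ≤ (|a| * (n + 1) + |b| * (n + 1)) * u n := by gcongr; exact (hu n).le
      _ = (|a| + |b|) * u n * (n + 1) := by ring
  exact Real.not_summable_one_div_natCast ((summable_nat_add_iff 1).mp hharmonic)

lemma IsBohrAlmostPeriodic.bddAbove {f : ℝ → ℝ} (hf : IsBohrAlmostPeriodic f) :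
    BddAbove (range f) := by
  obtain ⟨hcont, hperiods⟩ := hf
  obtain ⟨l, -, hdense⟩ := hperiods 1 one_pos
  obtain ⟨M, hM⟩ := (isCompact_Icc (a := 0) (b := l)).bddAbove_image hcont.continuousOn
  refine ⟨M + 1, ?_⟩
  rintro _ ⟨t, rfl⟩
  obtain ⟨τ, hτ, hτt, hτl⟩ := hdense (-t)
  have hM' : f (t + τ) ≤ M := hM ⟨t + τ, ⟨by linarith, by linarith⟩, rfl⟩
  linarith [(abs_le.mp (Real.dist_eq _ _ ▸ hτ t)).2]

/-- Ursell-type counterexample: `f = Σ_{n ≥ 1} f_n` is continuous, unbounded,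
not uniformly continuous, hence not Bohr almost periodic. -/
theorem ursell_counterexample (ε : ℕ → ℝ)
    (hε : ∀ n : ℕ, 1 ≤ n → ε n ∈ Set.Ioc (0 : ℝ) 1)
    (hsum : Summable fun n : ℕ => ε (n + 1))
    (f : ℝ → ℝ) (hf : f = fun t => ∑' n : ℕ, tentSum (ε (n + 1)) (n + 1) t) :
    Continuous f ∧ ¬ BddAbove (Set.range f) ∧ ¬ UniformContinuous f ∧
      ¬ IsBohrAlmostPeriodic f := by
  have hε' (n : ℕ) : ε (n + 1) ∈ Ioc 0 1 := hε (n + 1) (Nat.le_add_left 1 n)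
  have hlf := locallyFinite_support_tentSum (fun n => (hε' n).1) (fun n => (hε' n).2)
  have hcont : Continuous f :=
    hf ▸ continuous_tsum_of_locallyFinite (fun n => continuous_tentSum (hε' n).1 n.succ_pos) hlf
  have hpeak (n : ℕ) : (ε (n + 1))⁻¹ ≤ f (n + 1) := by
    have := (hlf.summable_apply ((n + 1 : ℕ) : ℝ)).le_tsum n fun m _ => tentSum_nonneg (hε' m).1 _
    rw [hf]
    exact_mod_cast (inv_le_tentSum_natCast (hε' n).1 n.succ_pos).trans this
  have hpeak_tendsto : Tendsto (fun n => (ε (n + 1))⁻¹) atTop atTop :=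
    (tendsto_nhdsWithin_iff.mpr ⟨hsum.tendsto_atTop_zero,
      Eventually.of_forall fun n => (hε' n).1⟩).inv_tendsto_nhdsGT_zero
  have hunbdd : ¬ BddAbove (range f) := by
    refine not_bddAbove_iff.mpr fun M => ?_
    obtain ⟨n, hn⟩ := (hpeak_tendsto.eventually_gt_atTop M).exists
    exact ⟨_, mem_range_self _, hn.trans_le (hpeak n)⟩
  refine ⟨hcont, hunbdd, fun huc => ?_, fun hbohr => hunbdd hbohr.bddAbove⟩
  obtain ⟨C, hC⟩ := huc.exists_le_add_mul_natCast
  exact not_summable_of_inv_le_linear (fun n => (hε' n).1)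
    (fun n => (hpeak n).trans (by exact_mod_cast hC (n + 1))) hsum
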